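/- arXiv:2311.07837 — 2 statements merged into one kernel-verified Lean document; each statement's English description precedes it below -/
import Mathlib

section
/- Let N be a positive integer, D a negative integer with D ≡ 0 or 1 (mod 4), and Γ a subgroup of SL₂(ℤ) containing Γ₁(N). Then Γ acts on 𝒬(D,N) (i.e., for every Q ∈ 𝒬(D,N) and γ ∈ Γ the form Q^γ belongs to 𝒬(D,N)) if and only if Γ is contained in Γ₀(M_{D,N}), i.e., if and only if for every [[q,r],[s,t]] ∈ Γ, every prime p dividing N with Kronecker symbol (D/p) ≠ −1 divides s. -/
open Matrix CongruenceSubgroup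
open scoped MatrixGroups

/-- `ax² + bxy + cy²` belongs to `𝒬(D, N)`: primitive, positive definite of
discriminant `D`, with leading coefficient prime to `N`. -/
def IsFormClassForm (D : ℤ) (N : ℕ) (a b c : ℤ) : Prop :=
  Int.gcd a (Int.gcd b c : ℤ) = 1 ∧ b ^ 2 - 4 * a * c = D ∧ 0 < a ∧ Int.gcd a (N : ℤ) = 1

/-- The Kronecker symbol `(D/p)` is different from `-1`: for odd primes `p` this says the
Legendre symbol `(D/p) ≠ -1`, and for `p = 2` it says `D ≢ 5 (mod 8)`. -/
def KronSymNeNegOne (D : ℤ) (p : ℕ) : Prop :=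
  if p = 2 then ¬ D ≡ 5 [ZMOD 8] else ∀ _ : Fact p.Prime, legendreSym p D ≠ -1

/-!
Everything rests on `4a·Q(x, y) = (2ax + by)² - D y²` for `Q = ax² + bxy + cy²` of discriminant `D`.
Discriminant, primitivity and definiteness are preserved by all of `SL₂(ℤ)`, so only the
condition `gcd(Q(q, s), N) = 1` on the new leading coefficient is at stake, for `(q, s)` the first
column of `γ`. When `(D/p) = -1` the form is anisotropic mod `p`, so `p ∤ Q(q, s)` as `(q, s)` is
primitive; when `(D/p) ≠ -1` and `p ∣ s`, `p ∣ Q(q, s)` would force `p ∣ aq²`, which is impossible.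
Conversely, if `(D/p) ≠ -1` then `D` is a square mod `4p`, which gives a form `x² + bxy + cy²` of
discriminant `D` with `p ∣ c`; if `p ∤ s`, a translate `x ↦ x - ky` of it lies in `𝒬(D, N)` and
takes a value divisible by `p` at `(q, s)`.
-/

lemma Int.gcd_natCast_eq_one_iff {a : ℤ} {N : ℕ} :
    Int.gcd a N = 1 ↔ ∀ p : ℕ, p.Prime → p ∣ N → ¬ (p : ℤ) ∣ a := by
  rw [Int.gcd_eq_natAbs, Int.natAbs_natCast]
  refine ⟨fun h p hp hpN hpa => hp.one_lt.ne' ?_, fun h => Nat.coprime_of_dvd ?_⟩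
  · exact Nat.Coprime.eq_one_of_dvd (Nat.Coprime.coprime_dvd_left (Int.natCast_dvd.mp hpa) h) hpN
  · exact fun p hp hpa hpN => h p hp hpN (Int.natCast_dvd.mpr hpa)

lemma eq_zero_of_sq_eq_mul_sq {F : Type*} [Field F] {d u y : F} (hd : ¬ IsSquare d)
    (h : u ^ 2 = d * y ^ 2) : y = 0 := by
  by_contra hy
  exact hd ⟨u / y, by field_simp; linear_combination -h⟩

section QuadraticForm

variable {D a b c : ℤ}

lemma four_mul_eval (hdisc : b ^ 2 - 4 * a * c = D) (x y : ℤ) :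
    4 * a * (a * x ^ 2 + b * x * y + c * y ^ 2) = (2 * a * x + b * y) ^ 2 - D * y ^ 2 := by
  rw [← hdisc]; ring

lemma eval_pos (hdisc : b ^ 2 - 4 * a * c = D) (hD : D < 0) (ha : 0 < a) {x y : ℤ}
    (hxy : ¬ (x = 0 ∧ y = 0)) : 0 < a * x ^ 2 + b * x * y + c * y ^ 2 := by
  have key := four_mul_eval hdisc x y
  rcases eq_or_ne y 0 with rfl | hy
  · have hx : x ≠ 0 := by tauto
    simp only [mul_zero, zero_pow two_ne_zero, add_zero]
    positivity
  · have : 0 < -D * y ^ 2 := mul_pos (by omega) (by positivity)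
    nlinarith [sq_nonneg (2 * a * x + b * y)]

lemma dvd_of_dvd_eval_of_not_isSquare {p : ℕ} [Fact p.Prime] (hD : ¬ IsSquare (D : ZMod p))
    (hdisc : b ^ 2 - 4 * a * c = D) {x y : ℤ} (h : (p : ℤ) ∣ a * x ^ 2 + b * x * y + c * y ^ 2) :
    (p : ℤ) ∣ y := by
  rw [← ZMod.intCast_zmod_eq_zero_iff_dvd] at h ⊢
  refine eq_zero_of_sq_eq_mul_sq (u := ((2 * a * x + b * y : ℤ) : ZMod p)) hD ?_
  have := congrArg (Int.cast : ℤ → ZMod p) (four_mul_eval hdisc x y)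
  push_cast at this h ⊢
  linear_combination -this + 4 * (a : ZMod p) * h

lemma odd_coeffs_of_discr_modEq_five (hdisc : b ^ 2 - 4 * a * c = D) (hD : D ≡ 5 [ZMOD 8]) :
    Odd a ∧ Odd b ∧ Odd c := by
  rw [Int.ModEq] at hD
  have hb : Odd b := by
    rw [← Int.not_even_iff_odd]
    rintro ⟨k, rfl⟩
    have : 4 ∣ D := ⟨k ^ 2 - a * c, by linear_combination -hdisc⟩
    omega
  have hac : Odd (a * c) := by
    rw [← Int.not_even_iff_odd]
    rintro ⟨e, he⟩
    obtain ⟨m, rfl⟩ := hb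
    obtain ⟨w, hw⟩ := Int.even_mul_succ_self m
    have : 8 ∣ D - 1 := ⟨w - e, by linear_combination -hdisc + 4 * hw - 4 * he⟩
    omega
  exact ⟨(Int.odd_mul.mp hac).1, hb, (Int.odd_mul.mp hac).2⟩

lemma two_dvd_of_two_dvd_eval (hdisc : b ^ 2 - 4 * a * c = D) (hD : D ≡ 5 [ZMOD 8]) {x y : ℤ}
    (h : 2 ∣ a * x ^ 2 + b * x * y + c * y ^ 2) : 2 ∣ x ∧ 2 ∣ y := by
  obtain ⟨ha, hb, hc⟩ := odd_coeffs_of_discr_modEq_five hdisc hD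
  simp only [← even_iff_two_dvd, Int.even_add, Int.even_mul, Int.even_pow' two_ne_zero,
    Int.not_even_iff_odd.mpr ha, Int.not_even_iff_odd.mpr hb, Int.not_even_iff_odd.mpr hc] at h ⊢
  tauto

lemma dvd_of_dvd_eval_of_not_kronSymNeNegOne {p : ℕ} (hp : p.Prime) (hK : ¬ KronSymNeNegOne D p)
    (hdisc : b ^ 2 - 4 * a * c = D) {x y : ℤ}
    (h : (p : ℤ) ∣ a * x ^ 2 + b * x * y + c * y ^ 2) : (p : ℤ) ∣ x ∧ (p : ℤ) ∣ y := by
  rw [KronSymNeNegOne] at hK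
  split_ifs at hK with hp2
  · subst hp2
    exact two_dvd_of_two_dvd_eval hdisc (not_not.mp hK) h
  · have : Fact p.Prime := ⟨hp⟩
    push Not at hK
    have hD : ¬ IsSquare (D : ZMod p) := (legendreSym.eq_neg_one_iff p).mp hK.2
    have h' : (p : ℤ) ∣ c * y ^ 2 + b * y * x + a * x ^ 2 := by convert h using 1; ring
    exact ⟨dvd_of_dvd_eval_of_not_isSquare hD (by linear_combination hdisc) h',
      dvd_of_dvd_eval_of_not_isSquare hD hdisc h⟩

lemma gcd_eval_eq_one {N : ℕ} (hdisc : b ^ 2 - 4 * a * c = D) (ha : Int.gcd a N = 1) {x y : ℤ}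
    (hxy : IsCoprime x y)
    (hy : ∀ p : ℕ, p.Prime → p ∣ N → KronSymNeNegOne D p → (p : ℤ) ∣ y) :
    Int.gcd (a * x ^ 2 + b * x * y + c * y ^ 2) N = 1 := by
  rw [Int.gcd_natCast_eq_one_iff] at ha ⊢
  intro p hp hpN hpQ
  have hp' : Prime (p : ℤ) := Nat.prime_iff_prime_int.mp hp
  suffices (p : ℤ) ∣ x ∧ (p : ℤ) ∣ y from hp'.not_isUnit (hxy.isUnit_of_dvd' this.1 this.2)
  by_cases hK : KronSymNeNegOne D p
  · have hpy := hy p hp hpN hK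
    have hpax : (p : ℤ) ∣ a * x ^ 2 := by
      rw [show a * x ^ 2 = (a * x ^ 2 + b * x * y + c * y ^ 2) - y * (b * x + c * y) by ring]
      exact dvd_sub hpQ (hpy.mul_right _)
    exact ⟨hp'.dvd_of_dvd_pow ((hp'.dvd_or_dvd hpax).resolve_left (ha p hp hpN)), hpy⟩
  · exact dvd_of_dvd_eval_of_not_kronSymNeNegOne hp hK hdisc hpQ

variable {q r s t : ℤ}

lemma discr_transform :
    (2 * a * q * r + b * (q * t + r * s) + 2 * c * s * t) ^ 2
      - 4 * (a * q ^ 2 + b * q * s + c * s ^ 2) * (a * r ^ 2 + b * r * t + c * t ^ 2)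
      = (q * t - r * s) ^ 2 * (b ^ 2 - 4 * a * c) := by
  ring

lemma dvd_coeffs_of_dvd_transform (hdet : q * t - r * s = 1) {d : ℤ}
    (ha : d ∣ a * q ^ 2 + b * q * s + c * s ^ 2)
    (hb : d ∣ 2 * a * q * r + b * (q * t + r * s) + 2 * c * s * t)
    (hc : d ∣ a * r ^ 2 + b * r * t + c * t ^ 2) : d ∣ a ∧ d ∣ b ∧ d ∣ c := by
  obtain ⟨A, hA⟩ := ha
  obtain ⟨B, hB⟩ := hb
  obtain ⟨C, hC⟩ := hc
  refine ⟨⟨A * t ^ 2 - B * s * t + C * s ^ 2, ?_⟩,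
    ⟨-2 * A * r * t + B * (q * t + r * s) - 2 * C * q * s, ?_⟩,
    ⟨A * r ^ 2 - B * q * r + C * q ^ 2, ?_⟩⟩
  · linear_combination t ^ 2 * hA - s * t * hB + s ^ 2 * hC - a * (q * t - r * s + 1) * hdet
  · linear_combination -2 * r * t * hA + (q * t + r * s) * hB - 2 * q * s * hC
      - b * (q * t - r * s + 1) * hdet
  · linear_combination r ^ 2 * hA - q * r * hB + q ^ 2 * hC - c * (q * t - r * s + 1) * hdet

end QuadraticForm

lemma gcd_gcd_eq_one_of_forall_dvd {a b c a' b' c' : ℤ} (h : Int.gcd a (Int.gcd b c) = 1)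
    (hdvd : ∀ d : ℤ, d ∣ a' → d ∣ b' → d ∣ c' → d ∣ a ∧ d ∣ b ∧ d ∣ c) :
    Int.gcd a' (Int.gcd b' c') = 1 := by
  obtain ⟨ha, hb, hc⟩ := hdvd _ (Int.gcd_dvd_left a' _)
    ((Int.gcd_dvd_right a' _).trans (Int.gcd_dvd_left b' c'))
    ((Int.gcd_dvd_right a' _).trans (Int.gcd_dvd_right b' c'))
  have := Int.dvd_coe_gcd ha (Int.dvd_coe_gcd hb hc)
  rw [h] at this
  exact Nat.dvd_one.mp (Int.natCast_dvd_natCast.mp this)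

lemma isFormClassForm_transform {N : ℕ} {D a b c q r s t : ℤ} (hD : D < 0)
    (hdet : q * t - r * s = 1)
    (hs : ∀ p : ℕ, p.Prime → p ∣ N → KronSymNeNegOne D p → (p : ℤ) ∣ s)
    (h : IsFormClassForm D N a b c) :
    IsFormClassForm D N (a * q ^ 2 + b * q * s + c * s ^ 2)
      (2 * a * q * r + b * (q * t + r * s) + 2 * c * s * t) (a * r ^ 2 + b * r * t + c * t ^ 2) := by
  obtain ⟨hprim, hdisc, ha, haN⟩ := h
  have hqs : IsCoprime q s := ⟨t, -r, by linear_combination hdet⟩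
  refine ⟨gcd_gcd_eq_one_of_forall_dvd hprim fun d => dvd_coeffs_of_dvd_transform hdet,
    by rw [discr_transform, hdet, hdisc, one_pow, one_mul], eval_pos hdisc hD ha ?_,
    gcd_eval_eq_one hdisc haN hqs hs⟩
  rintro ⟨rfl, rfl⟩
  exact not_isCoprime_zero_zero hqs

lemma four_dvd_sq_sub {D b : ℤ} (hD4 : D % 4 = 0 ∨ D % 4 = 1) (hb : 2 ∣ b - D) :
    4 ∣ b ^ 2 - D := by
  obtain ⟨j, hj⟩ := hb
  rcases hD4 with hD4 | hD4
  · obtain ⟨e, rfl⟩ : 4 ∣ D := by omega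
    exact ⟨4 * e ^ 2 + 4 * e * j + j ^ 2 - e, by linear_combination (b + 4 * e + 2 * j) * hj⟩
  · obtain ⟨e, rfl⟩ : ∃ e, D = 4 * e + 1 := ⟨D / 4, by omega⟩
    exact ⟨4 * e ^ 2 + e + 4 * e * j + j + j ^ 2,
      by linear_combination (b + 4 * e + 1 + 2 * j) * hj⟩

lemma exists_discr_eq_dvd {D : ℤ} (hD4 : D % 4 = 0 ∨ D % 4 = 1) {p : ℕ} (hp : p.Prime)
    (hK : KronSymNeNegOne D p) : ∃ b c : ℤ, b ^ 2 - 4 * c = D ∧ (p : ℤ) ∣ c := by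
  rw [KronSymNeNegOne] at hK
  split_ifs at hK with hp2
  · subst hp2
    rw [Int.ModEq] at hK
    rcases (by omega : D % 8 = 0 ∨ D % 8 = 4 ∨ D % 8 = 1) with h | h | h
    · exact ⟨0, -(D / 4), by omega, by omega⟩
    · exact ⟨2, 1 - D / 4, by omega, by omega⟩
    · exact ⟨1, (1 - D) / 4, by omega, by omega⟩
  · have : Fact p.Prime := ⟨hp⟩
    obtain ⟨β, hβ⟩ : IsSquare (D : ZMod p) := by
      by_contra hns
      exact hK this ((legendreSym.eq_neg_one_iff p).mpr hns)
    -- `β.val + p (β.val + D)` lifts `β` and has the parity of `D`, as `p` is odd.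
    set b : ℤ := β.val + p * (β.val + D) with hb
    obtain ⟨m, hm⟩ := hp.odd_of_ne_two hp2
    have hpm : (p : ℤ) = 2 * m + 1 := by exact_mod_cast hm
    have hbD : 2 ∣ b - D := ⟨(m + 1) * β.val + m * D, by rw [hb, hpm]; ring⟩
    have hpb : (p : ℤ) ∣ b ^ 2 - D := by
      rw [← ZMod.intCast_zmod_eq_zero_iff_dvd, hb]
      push_cast [ZMod.natCast_val, ZMod.cast_id, ZMod.natCast_self]
      linear_combination -hβ
    obtain ⟨c, hc⟩ := four_dvd_sq_sub hD4 hbD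
    refine ⟨b, c, by linear_combination hc, ?_⟩
    have hp' : Prime (p : ℤ) := Nat.prime_iff_prime_int.mp hp
    refine (hp'.dvd_or_dvd (hc ▸ hpb)).resolve_left fun h4 => hp2 ?_
    have h4' : p ∣ 2 ^ 2 := by exact_mod_cast h4
    exact (Nat.prime_dvd_prime_iff_eq hp Nat.prime_two).mp (hp.dvd_of_dvd_pow h4')

lemma exists_dvd_eval_of_not_dvd {D : ℤ} (hD4 : D % 4 = 0 ∨ D % 4 = 1) {p : ℕ} (hp : p.Prime)
    (hK : KronSymNeNegOne D p) (q : ℤ) {s : ℤ} (hs : ¬ (p : ℤ) ∣ s) :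
    ∃ b c : ℤ, b ^ 2 - 4 * c = D ∧ (p : ℤ) ∣ q ^ 2 + b * q * s + c * s ^ 2 := by
  obtain ⟨b, c, hdisc, c₁, hc₁⟩ := exists_discr_eq_dvd hD4 hp hK
  obtain ⟨u, v, huv⟩ :=
    (Irreducible.coprime_iff_not_dvd (Nat.prime_iff_prime_int.mp hp).irreducible).mpr hs
  -- Translate `x² + bxy + cy²` by `x ↦ x - qv y`, where `qv ≡ q / s (mod p)`.
  refine ⟨b - 2 * (q * v), (q * v) ^ 2 - b * (q * v) + c, by linear_combination hdisc,
    q * u * (q * u * p) + b * q * u * s + c₁ * s ^ 2, ?_⟩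
  linear_combination (-q * (q - q * v * s + q * u * p + b * s)) * huv + s ^ 2 * hc₁

theorem acts_on_forms_iff_le_Gamma0_general (N : ℕ)
    (D : ℤ) (hD : D < 0) (hD4 : D % 4 = 0 ∨ D % 4 = 1)
    (Γ : Subgroup SL(2, ℤ)) :
    (∀ a b c : ℤ, IsFormClassForm D N a b c → ∀ γ ∈ Γ,
      IsFormClassForm D N
        (a * (γ 0 0) ^ 2 + b * (γ 0 0) * (γ 1 0) + c * (γ 1 0) ^ 2)
        (2 * a * (γ 0 0) * (γ 0 1) + b * ((γ 0 0) * (γ 1 1) + (γ 0 1) * (γ 1 0))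
          + 2 * c * (γ 1 0) * (γ 1 1))
        (a * (γ 0 1) ^ 2 + b * (γ 0 1) * (γ 1 1) + c * (γ 1 1) ^ 2)) ↔
      (∀ γ ∈ Γ, ∀ p : ℕ, p.Prime → p ∣ N → KronSymNeNegOne D p → (p : ℤ) ∣ γ 1 0) := by
  constructor
  · intro h γ hγ p hp hpN hK
    by_contra hs
    obtain ⟨b, c, hdisc, hdvd⟩ := exists_dvd_eval_of_not_dvd hD4 hp hK (γ 0 0) hs
    have hQ : IsFormClassForm D N 1 b c := ⟨by simp, by linear_combination hdisc, one_pos, by simp⟩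
    have hcop := (h 1 b c hQ γ hγ).2.2.2
    rw [one_mul, Int.gcd_natCast_eq_one_iff] at hcop
    exact hcop p hp hpN hdvd
  · intro h a b c hQ γ hγ
    have hdet : γ 0 0 * γ 1 1 - γ 0 1 * γ 1 0 = 1 := by
      rw [← det_fin_two]
      exact γ.det_coe
    exact isFormClassForm_transform hD hdet (h γ hγ) hQ

/-- **Proposition 6.4.** A subgroup `Γ ⊇ Γ₁(N)` of `SL₂(ℤ)` acts on `𝒬(D, N)` (i.e.
`Q^γ ∈ 𝒬(D, N)` for all `Q ∈ 𝒬(D, N)`, `γ ∈ Γ`) if and only if `Γ ⊆ Γ₀(M_{D,N})`,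
i.e. every prime `p ∣ N` with Kronecker symbol `(D/p) ≠ -1` divides the lower-left
entry of every element of `Γ`. -/
theorem acts_on_forms_iff_le_Gamma0 (N : ℕ) (hN : 0 < N)
    (D : ℤ) (hD : D < 0) (hD4 : D % 4 = 0 ∨ D % 4 = 1)
    (Γ : Subgroup SL(2, ℤ)) (hΓ : Gamma1 N ≤ Γ) :
    (∀ a b c : ℤ, IsFormClassForm D N a b c → ∀ γ ∈ Γ,
      IsFormClassForm D N
        (a * (γ 0 0) ^ 2 + b * (γ 0 0) * (γ 1 0) + c * (γ 1 0) ^ 2)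
        (2 * a * (γ 0 0) * (γ 0 1) + b * ((γ 0 0) * (γ 1 1) + (γ 0 1) * (γ 1 0))
          + 2 * c * (γ 1 0) * (γ 1 1))
        (a * (γ 0 1) ^ 2 + b * (γ 0 1) * (γ 1 1) + c * (γ 1 1) ^ 2)) ↔
      (∀ γ ∈ Γ, ∀ p : ℕ, p.Prime → p ∣ N → KronSymNeNegOne D p → (p : ℤ) ∣ γ 1 0) :=
  acts_on_forms_iff_le_Gamma0_general N D hD hD4 Γ
end

section
/- Let N be a positive integer and D a negative integer with D ≡ 0 or 1 (mod 4). Then the set G = { a mod N ∈ (ℤ/Nℤ)ˣ : there exist integers a, b, c with gcd(a,b,c)=1, b²−4ac=D, a>0, gcd(a,N)=1 reducing to this class }, i.e., the set of residue classes modulo N of leading coefficients of forms in 𝒬(D,N), is a subgroup of (ℤ/Nℤ)ˣ. -/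
/-!
The classes form a submonoid of the finite group `(ZMod N)ˣ`, hence a subgroup; the principal
form `x² + bxy + cy²` with `b ∈ {0, 1}` gives `1`. For a product, let `(a₁, b₁, c₁)` and
`(a₂, b₂, c₂)` be primitive of discriminant `D`. Substituting into the second form a coprime pair
`(x, y) ≡ (1, 0) mod N` gives an equivalent primitive form whose leading coefficient
`A = a₂x² + b₂xy + c₂y² ≡ a₂` is positive since `D < 0`, and `(x, y)` can be chosen with `A`
coprime to `a₁`: modulo each prime `p ∣ a₁` this asks a quadratic not to vanish identically, and
the Chinese remainder theorem glues the local choices. After translating both forms to a common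
middle coefficient `b`, Dirichlet composition yields the primitive form `(a₁A, b, C)` of
discriminant `D`.
-/

theorem gcd_gcd_eq_one_iff_forall_prime {a b c : ℤ} :
    Int.gcd a (Int.gcd b c : ℤ) = 1 ↔ ∀ p : ℤ, Prime p → p ∣ a → p ∣ b → ¬ p ∣ c := by
  constructor
  · intro h p hp ha hb hc
    have hp1 := Int.dvd_coe_gcd ha (Int.dvd_coe_gcd hb hc)
    rw [h, Nat.cast_one] at hp1
    exact hp.not_dvd_one hp1
  · intro h
    rw [← Int.isCoprime_iff_gcd_eq_one]
    refine isCoprime_of_prime_dvd ?_ fun p hp hpa hpbc => ?_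
    · rintro ⟨rfl, hbc⟩
      obtain ⟨rfl, rfl⟩ := Int.gcd_eq_zero_iff.mp (by exact_mod_cast hbc)
      exact h 2 Int.prime_two (dvd_zero _) (dvd_zero _) (dvd_zero _)
    · exact h p hp hpa (hpbc.trans (Int.gcd_dvd_left _ _)) (hpbc.trans (Int.gcd_dvd_right _ _))

theorem exists_isCoprime_apply_of_forall_prime {f : ℤ → ℤ} (hf : ∀ t t', t - t' ∣ f t - f t')
    {M : ℤ} (hM : M ≠ 0) (h : ∀ p : ℕ, p.Prime → (p : ℤ) ∣ M → ∃ t, ¬ (p : ℤ) ∣ f t) :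
    ∃ t, IsCoprime (f t) M := by
  have h' : ∀ p ∈ M.natAbs.primeFactors, ∃ t, ¬ (p : ℤ) ∣ f t := fun p hp =>
    h p (Nat.prime_of_mem_primeFactors hp) (Int.natCast_dvd.mpr (Nat.dvd_of_mem_primeFactors hp))
  choose! g hg using h'
  obtain ⟨k, hk⟩ := Nat.chineseRemainderOfFinset (fun p => (g p % p).toNat) id
    M.natAbs.primeFactors (fun p hp => (Nat.prime_of_mem_primeFactors hp).ne_zero)
    (fun p hp q hq hpq => (Nat.coprime_primes (Nat.prime_of_mem_primeFactors hp)
      (Nat.prime_of_mem_primeFactors hq)).mpr hpq)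
  refine ⟨k, Int.isCoprime_iff_nat_coprime.mpr (Nat.coprime_of_dvd fun p hp hpf hpM => ?_)⟩
  have hmem : p ∈ M.natAbs.primeFactors := Nat.mem_primeFactors.mpr ⟨hp, hpM, by simpa⟩
  have hkg : (k : ℤ) ≡ g p [ZMOD p] := by
    have := Int.natCast_modEq_iff.mpr (hk p hmem)
    rw [Int.toNat_of_nonneg (Int.emod_nonneg _ (by exact_mod_cast hp.ne_zero))] at this
    exact this.trans (Int.mod_modEq _ _)
  have hfk : (p : ℤ) ∣ f k := Int.natCast_dvd.mpr hpf
  refine hg p hmem ?_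
  have := (hkg.symm.dvd.trans (hf k (g p))).sub hfk
  simpa using this

theorem Submonoid.inv_mem_of_finite {G : Type*} [Group G] [Finite G] (M : Submonoid G) {x : G}
    (hx : x ∈ M) : x⁻¹ ∈ M := by
  obtain ⟨n, hn⟩ := mem_powers_iff_mem_zpowers.mpr (inv_mem (Subgroup.mem_zpowers x))
  exact hn ▸ M.pow_mem hx n

theorem ZMod.isCoprime_of_intCast_eq_unit {N : ℕ} {a : ℤ} {u : (ZMod N)ˣ}
    (hu : (a : ZMod N) = u) : IsCoprime a N :=
  ((ZMod.coe_int_isUnit_iff_isCoprime a N).mp (hu ▸ u.isUnit)).symm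

theorem discr_substitution (a b c x y z w : ℤ) :
    (2 * a * x * z + b * (x * w + y * z) + 2 * c * y * w) ^ 2
      - 4 * (a * x ^ 2 + b * x * y + c * y ^ 2) * (a * z ^ 2 + b * z * w + c * w ^ 2)
      = (b ^ 2 - 4 * a * c) * (x * w - y * z) ^ 2 := by
  ring

theorem gcd_substitution_eq_one {a b c x y z w : ℤ} (hprim : Int.gcd a (Int.gcd b c : ℤ) = 1)
    (hdet : x * w - y * z = 1) :
    Int.gcd (a * x ^ 2 + b * x * y + c * y ^ 2)
      (Int.gcd (2 * a * x * z + b * (x * w + y * z) + 2 * c * y * w)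
        (a * z ^ 2 + b * z * w + c * w ^ 2) : ℤ) = 1 := by
  rw [gcd_gcd_eq_one_iff_forall_prime] at hprim ⊢
  -- the inverse substitution recovers `a, b, c` from the new coefficients
  intro p hp hA hB hC
  refine hprim p hp ?_ ?_ ?_
  · have := ((hA.mul_right (w ^ 2)).sub (hB.mul_right (y * w))).add (hC.mul_right (y ^ 2))
    refine this.trans (dvd_of_eq ?_)
    linear_combination (a * (x * w - y * z + 1)) * hdet
  · have := ((hB.mul_right (x * w + y * z)).sub (hA.mul_right (2 * z * w))).sub
      (hC.mul_right (2 * x * y))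
    refine this.trans (dvd_of_eq ?_)
    linear_combination (b * (x * w - y * z + 1)) * hdet
  · have := ((hA.mul_right (z ^ 2)).sub (hB.mul_right (x * z))).add (hC.mul_right (x ^ 2))
    refine this.trans (dvd_of_eq ?_)
    linear_combination (c * (x * w - y * z + 1)) * hdet

theorem gcd_translate_eq_one {a b c : ℤ} (hprim : Int.gcd a (Int.gcd b c : ℤ) = 1) (k : ℤ) :
    Int.gcd a (Int.gcd (b + 2 * a * k) (c + b * k + a * k ^ 2) : ℤ) = 1 := by
  convert gcd_substitution_eq_one (x := 1) (y := 0) (z := k) (w := 1) hprim (by ring) using 4 <;>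
    ring

theorem form_pos_of_discr_neg {a b c x y : ℤ} (ha : 0 < a) (hD : b ^ 2 - 4 * a * c < 0)
    (hxy : x ≠ 0 ∨ y ≠ 0) : 0 < a * x ^ 2 + b * x * y + c * y ^ 2 := by
  have key : 4 * a * (a * x ^ 2 + b * x * y + c * y ^ 2) =
      (2 * a * x + b * y) ^ 2 - (b ^ 2 - 4 * a * c) * y ^ 2 := by ring
  rcases eq_or_ne y 0 with rfl | hy
  · have hx : x ≠ 0 := by simpa using hxy
    simp only [mul_zero, zero_pow two_ne_zero, add_zero]
    positivity
  · have : 0 < 4 * a * (a * x ^ 2 + b * x * y + c * y ^ 2) := by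
      rw [key]; nlinarith [sq_nonneg (2 * a * x + b * y), pow_pos (sq_pos_of_ne_zero hy) 1]
    nlinarith

theorem exists_not_dvd_form_of_odd_prime {p : ℕ} (hp : p.Prime) (hp2 : p ≠ 2) {a b c N σ : ℤ}
    (hN : ¬ (p : ℤ) ∣ N) (hσ : ¬ (p : ℤ) ∣ σ)
    (habc : ¬ ((p : ℤ) ∣ a ∧ (p : ℤ) ∣ b ∧ (p : ℤ) ∣ c)) :
    ∃ t : ℤ, ¬ (p : ℤ) ∣ a * (1 + N * t) ^ 2 + b * (1 + N * t) * σ + c * σ ^ 2 := by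
  have := Fact.mk hp
  simp only [← ZMod.intCast_zmod_eq_zero_iff_dvd] at *
  push_cast at *
  by_contra! h
  -- `1 + N t` runs through all of `ZMod p`; vanishing at `0, 1, -1` forces `a = b = c = 0`
  have key : ∀ ξ : ZMod p, (a : ZMod p) * ξ ^ 2 + b * ξ * σ + c * σ ^ 2 = 0 := fun ξ => by
    obtain ⟨t, ht⟩ := ZMod.intCast_surjective (n := p) ((ξ - 1) / N)
    simpa [ht, mul_div_cancel₀ _ hN] using h t
  have h2 : (2 : ZMod p) ≠ 0 := Ring.two_ne_zero (by rwa [ZMod.ringChar_zmod_n])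
  have hc : (c : ZMod p) = 0 := by simpa [hσ] using key 0
  have ha : (a : ZMod p) = 0 := by
    have : 2 * (a : ZMod p) = 0 := by linear_combination key 1 + key (-1) - 2 * σ ^ 2 * hc
    simpa [h2] using this
  have hb : (b : ZMod p) = 0 := by simpa [ha, hc, hσ] using key 1
  exact habc ⟨ha, hb, hc⟩

theorem exists_not_two_dvd_form {a b c N : ℤ} (hN : Odd N)
    (habc : ¬ ((2 : ℤ) ∣ a ∧ (2 : ℤ) ∣ b ∧ (2 : ℤ) ∣ c)) :
    ∃ s t : ℤ, (s = 1 ∨ s = 2) ∧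
      ¬ (2 : ℤ) ∣ a * (1 + N * t) ^ 2 + b * (1 + N * t) * (s * N) + c * (s * N) ^ 2 := by
  simp only [← even_iff_two_dvd] at *
  by_cases ha : Even a
  · by_cases hc : Even c
    · refine ⟨1, 0, .inl rfl, ?_⟩
      have hb : ¬ Even b := fun hb => habc ⟨ha, hb, hc⟩
      simp [parity_simps, ha, hb, hc, hN]
    · refine ⟨1, 1, .inl rfl, ?_⟩
      simp [parity_simps, hc, hN]
  · refine ⟨2, 0, .inr rfl, ?_⟩
    simp [parity_simps, ha]

theorem exists_coprime_repr_isCoprime {a b c N M : ℤ} (hprim : Int.gcd a (Int.gcd b c : ℤ) = 1)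
    (hM : M ≠ 0) (hMN : IsCoprime M N) :
    ∃ x y : ℤ, N ∣ x - 1 ∧ N ∣ y ∧ IsCoprime x y ∧
      IsCoprime (a * x ^ 2 + b * x * y + c * y ^ 2) M := by
  have habc (p : ℕ) (hp : p.Prime) : ¬ ((p : ℤ) ∣ a ∧ (p : ℤ) ∣ b ∧ (p : ℤ) ∣ c) :=
    fun ⟨ha, hb, hc⟩ =>
      gcd_gcd_eq_one_iff_forall_prime.mp hprim p (Nat.prime_iff_prime_int.mp hp) ha hb hc
  have hpN (p : ℕ) (hp : p.Prime) (hpM : (p : ℤ) ∣ M) : ¬ (p : ℤ) ∣ N := fun hpN =>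
    (Nat.prime_iff_prime_int.mp hp).not_isUnit (hMN.isUnit_of_dvd' hpM hpN)
  -- `y = N` can fail at `p = 2` (`a, b` odd, `c` even); then `y = 2N` works, and `s ∣ M`
  -- makes `x` prime to `s`
  obtain ⟨s, hs2, hsM, h2⟩ : ∃ s : ℤ, s ∣ 2 ∧ s ∣ M ∧ ((2 : ℤ) ∣ M → ∃ t : ℤ,
      ¬ (2 : ℤ) ∣ a * (1 + N * t) ^ 2 + b * (1 + N * t) * (s * N) + c * (s * N) ^ 2) := by
    by_cases hM2 : (2 : ℤ) ∣ M
    · have hN : Odd N := Int.not_even_iff_odd.mp fun h => hpN 2 Nat.prime_two hM2 h.two_dvd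
      obtain ⟨s, t, hs, ht⟩ := exists_not_two_dvd_form hN (habc 2 Nat.prime_two)
      refine ⟨s, ?_, ?_, fun _ => ⟨t, ht⟩⟩ <;> rcases hs with rfl | rfl <;> simp [hM2]
    · exact ⟨1, one_dvd _, one_dvd _, fun h => absurd h hM2⟩
  obtain ⟨t, ht⟩ := exists_isCoprime_apply_of_forall_prime
    (f := fun t => a * (1 + N * t) ^ 2 + b * (1 + N * t) * (s * N) + c * (s * N) ^ 2)
    (fun t t' => ⟨a * N * (2 + N * t + N * t') + b * s * N ^ 2, by ring⟩) hM fun p hp hpM => by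
      by_cases hp2 : p = 2
      · subst hp2
        exact h2 (by exact_mod_cast hpM)
      refine exists_not_dvd_form_of_odd_prime hp hp2 (hpN p hp hpM) (fun hsN => ?_) (habc p hp)
      rcases (Nat.prime_iff_prime_int.mp hp).dvd_or_dvd hsN with hs | hs
      · exact hp2 <|
          (Nat.prime_dvd_prime_iff_eq hp Nat.prime_two).mp (by exact_mod_cast hs.trans hs2)
      · exact hpN p hp hpM hs
  refine ⟨1 + N * t, s * N, ⟨t, by ring⟩, dvd_mul_left N s, ?_, ht⟩
  have hxs : IsCoprime (1 + N * t) s := by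
    have h : IsCoprime (a * (1 + N * t) ^ 2 + s * (N * (b * (1 + N * t) + c * s * N))) s := by
      convert ht.of_isCoprime_of_dvd_right hsM using 1
      ring
    exact (IsCoprime.pow_left_iff two_pos).mp h.of_add_mul_left_left.of_mul_left_right
  exact hxs.mul_right (isCoprime_one_left.add_mul_left_left t)

def IsLeadingCoeffOfPrimitiveForm (D a : ℤ) : Prop :=
  ∃ b c : ℤ, Int.gcd a (Int.gcd b c : ℤ) = 1 ∧ b ^ 2 - 4 * a * c = D

theorem isLeadingCoeffOfPrimitiveForm_one {D : ℤ} (hD4 : D % 4 = 0 ∨ D % 4 = 1) :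
    IsLeadingCoeffOfPrimitiveForm D 1 := by
  rcases hD4 with h | h
  · exact ⟨0, -(D / 4), by simp, by omega⟩
  · exact ⟨1, -(D / 4), by simp, by omega⟩

theorem isLeadingCoeffOfPrimitiveForm_apply {D a b c x y : ℤ}
    (hprim : Int.gcd a (Int.gcd b c : ℤ) = 1) (hdisc : b ^ 2 - 4 * a * c = D)
    (hxy : IsCoprime x y) :
    IsLeadingCoeffOfPrimitiveForm D (a * x ^ 2 + b * x * y + c * y ^ 2) := by
  obtain ⟨z, w, hdet⟩ : ∃ z w, x * w - y * z = 1 :=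
    let ⟨u, v, h⟩ := hxy
    ⟨-v, u, by linear_combination h⟩
  exact ⟨_, _, gcd_substitution_eq_one hprim hdet, by rw [discr_substitution, hdet, hdisc]; ring⟩

theorem exists_common_middle_coeff {D a₁ a₂ b₁ b₂ c₁ c₂ : ℤ} (hd₁ : b₁ ^ 2 - 4 * a₁ * c₁ = D)
    (hd₂ : b₂ ^ 2 - 4 * a₂ * c₂ = D) (hcop : IsCoprime a₁ a₂) :
    ∃ k₁ k₂ : ℤ, b₁ + 2 * a₁ * k₁ = b₂ + 2 * a₂ * k₂ := by
  have hsq : Even (b₁ ^ 2 - b₂ ^ 2) := ⟨2 * (a₁ * c₁ - a₂ * c₂), by linear_combination hd₁ - hd₂⟩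
  obtain ⟨r, hr⟩ : Even (b₁ - b₂) := by simpa [Int.even_sub, parity_simps] using hsq
  obtain ⟨u, v, huv⟩ := hcop
  exact ⟨-(r * u), r * v, by linear_combination hr - 2 * r * huv⟩

theorem isLeadingCoeffOfPrimitiveForm_mul_of_common_middle {D a₁ a₂ b c₁ c₂ : ℤ}
    (hp₁ : Int.gcd a₁ (Int.gcd b c₁ : ℤ) = 1) (hp₂ : Int.gcd a₂ (Int.gcd b c₂ : ℤ) = 1)
    (hd₁ : b ^ 2 - 4 * a₁ * c₁ = D) (hd₂ : b ^ 2 - 4 * a₂ * c₂ = D) (hcop : IsCoprime a₁ a₂)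
    (ha₂ : a₂ ≠ 0) :
    IsLeadingCoeffOfPrimitiveForm D (a₁ * a₂) := by
  have key : a₁ * c₁ = a₂ * c₂ := by linarith
  obtain ⟨C, rfl⟩ : a₂ ∣ c₁ := hcop.symm.dvd_of_dvd_mul_left ⟨c₂, key⟩
  have hc₂ : c₂ = a₁ * C := mul_left_cancel₀ ha₂ (by linear_combination -key)
  rw [gcd_gcd_eq_one_iff_forall_prime] at hp₁ hp₂
  refine ⟨b, C, gcd_gcd_eq_one_iff_forall_prime.mpr fun p hp hpa hpb hpC => ?_,
    by linear_combination hd₁⟩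
  rcases hp.dvd_or_dvd hpa with h | h
  · exact hp₁ p hp h hpb (dvd_mul_of_dvd_right hpC _)
  · exact hp₂ p hp h hpb (hc₂ ▸ dvd_mul_of_dvd_right hpC _)

theorem IsLeadingCoeffOfPrimitiveForm.mul {D a₁ a₂ : ℤ} (h₁ : IsLeadingCoeffOfPrimitiveForm D a₁)
    (h₂ : IsLeadingCoeffOfPrimitiveForm D a₂) (hcop : IsCoprime a₁ a₂) (ha₂ : a₂ ≠ 0) :
    IsLeadingCoeffOfPrimitiveForm D (a₁ * a₂) := by
  obtain ⟨b₁, c₁, hp₁, hd₁⟩ := h₁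
  obtain ⟨b₂, c₂, hp₂, hd₂⟩ := h₂
  obtain ⟨k₁, k₂, hk⟩ := exists_common_middle_coeff hd₁ hd₂ hcop
  have hp₂' := gcd_translate_eq_one hp₂ k₂
  rw [← hk] at hp₂'
  exact isLeadingCoeffOfPrimitiveForm_mul_of_common_middle (gcd_translate_eq_one hp₁ k₁) hp₂'
    (by linear_combination hd₁) (by rw [hk]; linear_combination hd₂) hcop ha₂

theorem IsLeadingCoeffOfPrimitiveForm.exists_mul_modEq {D a₁ a₂ N : ℤ} (hD : D < 0)
    (h₁ : IsLeadingCoeffOfPrimitiveForm D a₁) (h₂ : IsLeadingCoeffOfPrimitiveForm D a₂)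
    (ha₁ : 0 < a₁) (ha₂ : 0 < a₂) (ha₁N : IsCoprime a₁ N) :
    ∃ a, IsLeadingCoeffOfPrimitiveForm D a ∧ 0 < a ∧ a ≡ a₁ * a₂ [ZMOD N] := by
  obtain ⟨b₂, c₂, hp₂, hd₂⟩ := h₂
  obtain ⟨x, y, hx, hy, hxy, hcop⟩ := exists_coprime_repr_isCoprime hp₂ ha₁.ne' ha₁N
  have hxy₀ : x ≠ 0 ∨ y ≠ 0 := by
    by_contra! h
    obtain ⟨rfl, rfl⟩ := h
    exact not_isCoprime_zero_zero hxy
  have hA := form_pos_of_discr_neg ha₂ (hd₂ ▸ hD) hxy₀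
  refine ⟨a₁ * _, h₁.mul (isLeadingCoeffOfPrimitiveForm_apply hp₂ hd₂ hxy) hcop.symm hA.ne',
    mul_pos ha₁ hA, ?_⟩
  have hx1 : x ≡ 1 [ZMOD N] := (Int.modEq_iff_dvd.mpr hx).symm
  have hy0 : y ≡ 0 [ZMOD N] := Int.modEq_zero_iff_dvd.mpr hy
  have : a₂ * x ^ 2 + b₂ * x * y + c₂ * y ^ 2 ≡ a₂ * 1 ^ 2 + b₂ * 1 * 0 + c₂ * 0 ^ 2 [ZMOD N] := by
    gcongr
  exact this.mul_left a₁ |>.trans (by simp)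

def leadingCoeffSubmonoid (N : ℕ) (D : ℤ) (hD : D < 0) (hD4 : D % 4 = 0 ∨ D % 4 = 1) :
    Submonoid (ZMod N)ˣ where
  carrier := {u | ∃ a, IsLeadingCoeffOfPrimitiveForm D a ∧ 0 < a ∧ (a : ZMod N) = u}
  one_mem' := ⟨1, isLeadingCoeffOfPrimitiveForm_one hD4, one_pos, by simp⟩
  mul_mem' := by
    rintro u₁ u₂ ⟨a₁, h₁, ha₁, hu₁⟩ ⟨a₂, h₂, ha₂, hu₂⟩
    obtain ⟨a, h, ha, hmod⟩ :=
      h₁.exists_mul_modEq hD h₂ ha₁ ha₂ (ZMod.isCoprime_of_intCast_eq_unit hu₁)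
    refine ⟨a, h, ha, ?_⟩
    rw [Units.val_mul, ← hu₁, ← hu₂, ← Int.cast_mul, (ZMod.intCast_eq_intCast_iff _ _ _).mpr hmod]

theorem leadingCoeff_classes_form_subgroup_general (N : ℕ)
    (D : ℤ) (hD : D < 0) (hD4 : D % 4 = 0 ∨ D % 4 = 1) :
    ∃ G : Subgroup (ZMod N)ˣ, (G : Set (ZMod N)ˣ) =
      {u : (ZMod N)ˣ | ∃ a b c : ℤ,
        Int.gcd a (Int.gcd b c : ℤ) = 1 ∧ b ^ 2 - 4 * a * c = D ∧ 0 < a ∧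
          Int.gcd a (N : ℤ) = 1 ∧ ((a : ZMod N) = (u : ZMod N))} := by
  let M := leadingCoeffSubmonoid N D hD hD4
  refine ⟨{ M with inv_mem' := M.inv_mem_of_finite }, Set.ext fun u => ⟨?_, ?_⟩⟩
  · rintro ⟨a, ⟨b, c, hprim, hdisc⟩, ha, hu⟩
    exact ⟨a, b, c, hprim, hdisc, ha,
      Int.isCoprime_iff_gcd_eq_one.mp (ZMod.isCoprime_of_intCast_eq_unit hu), hu⟩
  · rintro ⟨a, b, c, hprim, hdisc, ha, -, hu⟩
    exact ⟨a, ⟨b, c, hprim, hdisc⟩, ha, hu⟩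

/-- **Remark 2.3 (i).** The set of residue classes modulo `N` of leading coefficients of
forms in `𝒬(D, N)` is a subgroup of `(ℤ/Nℤ)ˣ`. -/
theorem leadingCoeff_classes_form_subgroup (N : ℕ) (hN : 0 < N)
    (D : ℤ) (hD : D < 0) (hD4 : D % 4 = 0 ∨ D % 4 = 1) :
    ∃ G : Subgroup (ZMod N)ˣ, (G : Set (ZMod N)ˣ) =
      {u : (ZMod N)ˣ | ∃ a b c : ℤ,
        Int.gcd a (Int.gcd b c : ℤ) = 1 ∧ b ^ 2 - 4 * a * c = D ∧ 0 < a ∧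
          Int.gcd a (N : ℤ) = 1 ∧ ((a : ZMod N) = (u : ZMod N))} :=
  leadingCoeff_classes_form_subgroup_general N D hD hD4
end
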